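/- Suppose $X$ is a nonnegative random variable with a finite moment generating function, and $\lambda$ and $a$ are positive constants such that for any $\theta \ge 0$, $\mathbb{E}(X e^{\theta X}) \le \lambda e^{\theta a}\, \mathbb{E}(e^{\theta X})$. Then for any $t \ge \lambda$, $\mathbb{P}(X \ge t) \le \exp\big(-\frac{t}{a}\big(\log\frac{t}{\lambda} - 1 + \frac{\lambda}{t}\big)\big)$. -/

import Mathlib

/-!
The hypothesis says that the derivative of the cumulant generating function
`K θ = log 𝔼 e^{θX}`, namely `𝔼[X e^{θX}] / 𝔼 e^{θX}`, is at most `λ e^{θa}`. Since `K 0 = 0`,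
integrating gives `K θ ≤ λ (e^{θa} - 1) / a`, the cumulant generating function of `a` times a
Poisson variable of mean `λ / a`. The Chernoff bound at the optimal `θ = log (t / λ) / a` then
gives the Poisson-type tail.
-/

open MeasureTheory ProbabilityTheory Real

namespace ProbabilityTheory

variable {Ω : Type*} {m : MeasurableSpace Ω} {μ : Measure Ω} {X : Ω → ℝ}

lemma integrableExpSet_eq_univ_of_nonneg [IsFiniteMeasure μ] (hX : 0 ≤ᵐ[μ] X)
    (hint : ∀ θ : ℝ, 0 ≤ θ → Integrable (fun ω ↦ exp (θ * X ω)) μ) :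
    integrableExpSet X μ = Set.univ := by
  refine Set.eq_univ_of_forall fun θ ↦ ?_
  rcases le_total 0 θ with hθ | hθ
  · exact hint θ hθ
  have hXm : AEMeasurable X μ :=
    aemeasurable_of_aemeasurable_exp_mul one_ne_zero (hint 1 zero_le_one).aemeasurable
  refine (integrable_const (1 : ℝ)).mono
    (measurable_exp.comp_aemeasurable (hXm.const_mul θ)).aestronglyMeasurable ?_
  filter_upwards [hX] with ω hω
  simpa [abs_of_pos (exp_pos _)] using mul_nonpos_of_nonpos_of_nonneg hθ hω

lemma hasDerivAt_cgf [NeZero μ] {θ : ℝ} (hθ : θ ∈ interior (integrableExpSet X μ)) :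
    HasDerivAt (cgf X μ) (μ[fun ω ↦ X ω * exp (θ * X ω)] / mgf X μ θ) θ :=
  (hasDerivAt_mgf hθ).log (mgf_pos_iff.mpr (interior_subset (s := integrableExpSet X μ) hθ)).ne'

lemma cgf_le_of_integral_mul_exp_le [IsProbabilityMeasure μ]
    (hX : Set.Ici 0 ⊆ interior (integrableExpSet X μ)) {φ φ' : ℝ → ℝ} (hφ₀ : φ 0 = 0)
    (hφ : ∀ θ, 0 ≤ θ → HasDerivAt φ (φ' θ) θ)
    (h : ∀ θ, 0 ≤ θ → μ[fun ω ↦ X ω * exp (θ * X ω)] ≤ φ' θ * mgf X μ θ)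
    {θ : ℝ} (hθ : 0 ≤ θ) : cgf X μ θ ≤ φ θ := by
  have hderiv : ∀ s, 0 ≤ s → HasDerivAt (fun s ↦ φ s - cgf X μ s)
      (φ' s - μ[fun ω ↦ X ω * exp (s * X ω)] / mgf X μ s) s :=
    fun s hs ↦ (hφ s hs).sub (hasDerivAt_cgf (hX hs))
  have hmono : MonotoneOn (fun s ↦ φ s - cgf X μ s) (Set.Ici 0) := by
    refine monotoneOn_of_hasDerivWithinAt_nonneg (convex_Ici 0)
      (fun s hs ↦ (hderiv s hs).continuousAt.continuousWithinAt)
      (fun s hs ↦ (hderiv s (interior_subset hs)).hasDerivWithinAt) fun s hs ↦ ?_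
    have hs : 0 ≤ s := interior_subset hs
    rw [sub_nonneg, div_le_iff₀ (mgf_pos (interior_subset (s := integrableExpSet X μ) (hX hs)))]
    exact h s hs
  simpa [hφ₀] using hmono Set.self_mem_Ici hθ hθ

lemma measureReal_ge_le_of_cgf_le [IsFiniteMeasure μ]
    (hint : ∀ θ : ℝ, 0 ≤ θ → Integrable (fun ω ↦ exp (θ * X ω)) μ) {lam a t : ℝ}
    (hlam : 0 < lam) (ha : 0 < a) (ht : lam ≤ t)
    (hcgf : ∀ θ : ℝ, 0 ≤ θ → cgf X μ θ ≤ lam * (exp (θ * a) - 1) / a) :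
    μ.real {ω | t ≤ X ω} ≤ exp (-(t / a) * (log (t / lam) - 1 + lam / t)) := by
  have ht₀ : 0 < t := hlam.trans_le ht
  set θ := log (t / lam) / a with hθ_def
  have hθ : 0 ≤ θ := div_nonneg (log_nonneg ((one_le_div hlam).mpr ht)) ha.le
  have hexp : exp (θ * a) = t / lam := by
    rw [div_mul_cancel₀ _ ha.ne', exp_log (by positivity)]
  calc μ.real {ω | t ≤ X ω} ≤ exp (-θ * t + cgf X μ θ) := measure_ge_le_exp_cgf t hθ (hint θ hθ)
    _ ≤ exp (-θ * t + lam * (exp (θ * a) - 1) / a) := by gcongr; exact hcgf θ hθ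
    _ = exp (-(t / a) * (log (t / lam) - 1 + lam / t)) := by
      rw [hexp, hθ_def]
      congr 1
      field_simp
      ring

end ProbabilityTheory

/-- **Lemma 3.2**: a tail bound from a self-bounding condition on the moment generating
function. -/
theorem tail_of_mgf_bound {Ω : Type*} [MeasurableSpace Ω] (μ : Measure Ω)
    [IsProbabilityMeasure μ] (X : Ω → ℝ) (hXnn : ∀ ω, 0 ≤ X ω)
    (hmgf : ∀ θ : ℝ, 0 ≤ θ → Integrable (fun ω => Real.exp (θ * X ω)) μ)
    (lam a : ℝ) (hlam : 0 < lam) (ha : 0 < a)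
    (hyp : ∀ θ : ℝ, 0 ≤ θ →
      ∫ ω, X ω * Real.exp (θ * X ω) ∂μ ≤
        lam * Real.exp (θ * a) * ∫ ω, Real.exp (θ * X ω) ∂μ)
    (t : ℝ) (ht : lam ≤ t) :
    μ {ω | t ≤ X ω} ≤
      ENNReal.ofReal
        (Real.exp (-(t / a) * (Real.log (t / lam) - 1 + lam / t))) := by
  have hX : integrableExpSet X μ = Set.univ :=
    integrableExpSet_eq_univ_of_nonneg (ae_of_all _ hXnn) hmgf
  have hφ (θ : ℝ) :
      HasDerivAt (fun s ↦ lam * (exp (s * a) - 1) / a) (lam * exp (θ * a)) θ :=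
    (((((hasDerivAt_id θ).mul_const a).exp.sub_const 1).const_mul lam).div_const a).congr_deriv
      (by simp [mul_div_assoc, ha.ne'])
  have hcgf (θ : ℝ) (hθ : 0 ≤ θ) : cgf X μ θ ≤ lam * (exp (θ * a) - 1) / a :=
    cgf_le_of_integral_mul_exp_le (by simp [hX]) (by simp) (fun θ _ ↦ hφ θ) hyp hθ
  rw [ENNReal.le_ofReal_iff_toReal_le (measure_ne_top _ _) (exp_pos _).le]
  exact measureReal_ge_le_of_cgf_le hmgf hlam ha ht hcgf
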